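/- Let M₀, M₁, M_t, M∞ ∈ GL₂(ℂ) with M₀M₁M_tM∞ = I. Suppose M₀ = diag(e^{πiα₀}, e^{−πiα₀}) with e^{2πiα₀} ≠ 1, M_t = (−1)^{θ−1}I for an integer θ, tr M₁ = e^{πiα₁} + e^{−πiα₁}, tr M∞ = e^{πiα∞} + e^{−πiα∞}, det M₁ = 1, and α₀ + α₁ + α∞ = k − 3 for an integer k with θ ≡ k (mod 2). Then writing M₁ = [[a,b],[c,d]], we have a = e^{πiα₁}, d = e^{−πiα₁}, and bc = 0. -/

import Mathlib

/-!
Write `E₀, E₁, E∞` for `exp (π i α)` and `s = (-1)^(θ-1)`. The relation `α₀ + α₁ + α∞ = k - 3`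
with `θ ≡ k (mod 2)` gives `E∞ = s (E₀ E₁)⁻¹`. Since `M∞ = s (M₀ M₁)⁻¹` and a unimodular
`2 × 2` matrix has the same trace as its inverse, `tr M∞ = s · tr (M₀ M₁)`, i.e.
`E₀ a + E₀⁻¹ d = E₀ E₁ + E₀⁻¹ E₁⁻¹`. Together with `a + d = E₁ + E₁⁻¹` this is a linear system
in `(a, d)` whose determinant vanishes only if `E₀² = 1`, so `a = E₁`, `d = E₁⁻¹`, and then
`ad - bc = 1` forces `bc = 0`.
-/

open Complex
open scoped Real

lemma Matrix.trace_eq_mul_trace_of_mul_eq_smul_one {R : Type*} [CommRing R]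
    {A B : Matrix (Fin 2) (Fin 2) R} {c : R} (hA : A.det = 1) (h : A * B = c • 1) :
    B.trace = c * A.trace := by
  have hB : B = c • A.adjugate := by
    calc B = A.adjugate * (A * B) := by
          rw [← Matrix.mul_assoc, A.adjugate_mul, hA, one_smul, one_mul]
      _ = c • A.adjugate := by rw [h, Matrix.mul_smul, Matrix.mul_one]
  rw [hB, Matrix.trace_smul, smul_eq_mul, Matrix.adjugate_fin_two, Matrix.trace_fin_two,
    Matrix.trace_fin_two]
  simp only [Matrix.of_apply, Matrix.cons_val', Matrix.cons_val_zero, Matrix.cons_val_one,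
    Matrix.empty_val', Matrix.cons_val_fin_one]
  ring

lemma Matrix.trace_diagonal_fin_two_mul {R : Type*} [CommRing R] (x y : R)
    (M : Matrix (Fin 2) (Fin 2) R) :
    (Matrix.diagonal ![x, y] * M).trace = x * M 0 0 + y * M 1 1 := by
  simp [Matrix.trace_fin_two]

lemma eq_and_eq_inv_of_add_eq_of_twisted_add_eq {K : Type*} [Field K] {e f a d : K}
    (he : e ≠ 0) (he2 : e ^ 2 ≠ 1) (hsum : a + d = f + f⁻¹)
    (htwist : e * a + e⁻¹ * d = e * f + e⁻¹ * f⁻¹) : a = f ∧ d = f⁻¹ := by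
  have hkey : (e ^ 2 - 1) * (a - f) = 0 := by
    linear_combination e * htwist - hsum - (d - f⁻¹) * mul_inv_cancel₀ he
  have ha : a = f := sub_eq_zero.mp ((mul_eq_zero.mp hkey).resolve_left (sub_ne_zero.mpr he2))
  exact ⟨ha, by linear_combination hsum - ha⟩

lemma neg_one_pow_eq_zpow_of_even_sub {R : Type*} [DivisionRing R] {m : ℕ} {n : ℤ}
    (h : Even (n - m)) : (-1 : R) ^ m = (-1 : R) ^ n := by
  rw [← zpow_natCast, neg_one_zpow_eq_ite, neg_one_zpow_eq_ite]
  congr 1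
  simp only [eq_iff_iff, Int.even_iff] at *
  omega

lemma exp_pi_mul_I_eq_of_add_eq_int {α₀ α₁ α : ℝ} {n : ℤ} (h : α₀ + α₁ + α = n) :
    exp (π * I * α) = (-1) ^ n * (exp (π * I * α₀) * exp (π * I * α₁))⁻¹ := by
  have hα : (π * I * α : ℂ) = n * (π * I) + -(π * I * α₀) + -(π * I * α₁) := by
    rw [show (α : ℂ) = n - α₀ - α₁ by exact_mod_cast (by linarith : α = n - α₀ - α₁)]
    ring
  rw [hα, exp_add, exp_add, exp_int_mul, exp_pi_mul_I, exp_neg, exp_neg, mul_inv]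
  ring

theorem stmt14_general (θ : ℕ) (hθ : 2 ≤ θ) (k : ℤ) (hpar : (θ : ℤ) % 2 = k % 2)
    (α₀ α₁ αinf : ℝ) (hα : α₀ + α₁ + αinf = (k : ℝ) - 3)
    (M₀ M₁ Mt Minf : Matrix (Fin 2) (Fin 2) ℂ)
    (hprod : M₀ * M₁ * Mt * Minf = 1)
    (hM₀ : M₀ = Matrix.diagonal
      ![Complex.exp ((Real.pi : ℂ) * Complex.I * (α₀ : ℂ)),
        Complex.exp (-((Real.pi : ℂ) * Complex.I * (α₀ : ℂ)))])
    (hα₀ : Complex.exp (2 * (Real.pi : ℂ) * Complex.I * (α₀ : ℂ)) ≠ 1)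
    (hMt : Mt = ((-1 : ℂ) ^ (θ - 1)) • (1 : Matrix (Fin 2) (Fin 2) ℂ))
    (htr1 : Matrix.trace M₁ =
      Complex.exp ((Real.pi : ℂ) * Complex.I * (α₁ : ℂ)) +
        Complex.exp (-((Real.pi : ℂ) * Complex.I * (α₁ : ℂ))))
    (htrinf : Matrix.trace Minf =
      Complex.exp ((Real.pi : ℂ) * Complex.I * (αinf : ℂ)) +
        Complex.exp (-((Real.pi : ℂ) * Complex.I * (αinf : ℂ))))
    (hdet1 : M₁.det = 1) :
    M₁ 0 0 = Complex.exp ((Real.pi : ℂ) * Complex.I * (α₁ : ℂ)) ∧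
    M₁ 1 1 = Complex.exp (-((Real.pi : ℂ) * Complex.I * (α₁ : ℂ))) ∧
    M₁ 0 1 * M₁ 1 0 = 0 := by
  set E₀ := exp (π * I * α₀)
  set E₁ := exp (π * I * α₁)
  set s : ℂ := (-1) ^ (θ - 1)
  have hs : s * s = 1 := by rw [← pow_add]; exact Even.neg_one_pow ⟨θ - 1, rfl⟩
  have hEinf : exp (π * I * αinf) = s * (E₀ * E₁)⁻¹ := by
    rw [exp_pi_mul_I_eq_of_add_eq_int
        (by push_cast; linarith : α₀ + α₁ + αinf = ((k - 3 : ℤ) : ℝ)),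
      ← neg_one_pow_eq_zpow_of_even_sub (m := θ - 1) (n := k - 3)
        (by rw [Int.even_iff]; omega)]
  have hdet₀ : M₀.det = 1 := by
    rw [hM₀, Matrix.det_diagonal, Fin.prod_univ_two]
    simp [exp_neg, E₀]
  have hprod' : M₀ * M₁ * Minf = s • 1 := by
    rw [hMt, Matrix.mul_smul, Matrix.mul_one, Matrix.smul_mul] at hprod
    rw [← one_smul ℂ (M₀ * M₁ * Minf), ← hs, mul_smul, hprod]
  have htr : Minf.trace = s * (E₀ * M₁ 0 0 + E₀⁻¹ * M₁ 1 1) := by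
    have hdet : (M₀ * M₁).det = 1 := by rw [Matrix.det_mul, hdet₀, hdet1, one_mul]
    rw [Matrix.trace_eq_mul_trace_of_mul_eq_smul_one hdet hprod', hM₀,
      Matrix.trace_diagonal_fin_two_mul, exp_neg]
  have htwist : E₀ * M₁ 0 0 + E₀⁻¹ * M₁ 1 1 = E₀ * E₁ + E₀⁻¹ * E₁⁻¹ := by
    rw [htr, exp_neg, hEinf, mul_inv s, inv_eq_of_mul_eq_one_right hs, inv_inv] at htrinf
    linear_combination s * htrinf -
      (E₀ * M₁ 0 0 + E₀⁻¹ * M₁ 1 1 - (E₀ * E₁ + E₀⁻¹ * E₁⁻¹)) * hs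
  have hE₀ : E₀ ^ 2 ≠ 1 := by
    rwa [← exp_nat_mul, show ((2 : ℕ) : ℂ) * (π * I * α₀) = 2 * π * I * α₀ by push_cast; ring]
  obtain ⟨ha, hd⟩ := eq_and_eq_inv_of_add_eq_of_twisted_add_eq (exp_ne_zero _) hE₀
    (by rw [← Matrix.trace_fin_two, htr1, exp_neg]) htwist
  refine ⟨ha, by rw [hd, exp_neg], ?_⟩
  rw [Matrix.det_fin_two, ha, hd, mul_inv_cancel₀ (exp_ne_zero _)] at hdet1
  linear_combination -hdet1

theorem stmt14 (θ : ℕ) (hθ : 2 ≤ θ) (k : ℤ) (hpar : (θ : ℤ) % 2 = k % 2)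
    (α₀ α₁ αinf : ℝ) (hα : α₀ + α₁ + αinf = (k : ℝ) - 3)
    (M₀ M₁ Mt Minf : Matrix (Fin 2) (Fin 2) ℂ)
    (hprod : M₀ * M₁ * Mt * Minf = 1)
    (hM₀ : M₀ = Matrix.diagonal
      ![Complex.exp ((Real.pi : ℂ) * Complex.I * (α₀ : ℂ)),
        Complex.exp (-((Real.pi : ℂ) * Complex.I * (α₀ : ℂ)))])
    (hα₀ : Complex.exp (2 * (Real.pi : ℂ) * Complex.I * (α₀ : ℂ)) ≠ 1)
    (hMt : Mt = ((-1 : ℂ) ^ (θ - 1)) • (1 : Matrix (Fin 2) (Fin 2) ℂ))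
    (htr1 : Matrix.trace M₁ =
      Complex.exp ((Real.pi : ℂ) * Complex.I * (α₁ : ℂ)) +
        Complex.exp (-((Real.pi : ℂ) * Complex.I * (α₁ : ℂ))))
    (htrinf : Matrix.trace Minf =
      Complex.exp ((Real.pi : ℂ) * Complex.I * (αinf : ℂ)) +
        Complex.exp (-((Real.pi : ℂ) * Complex.I * (αinf : ℂ))))
    (hdet1 : M₁.det = 1) (hdetinf : Minf.det = 1) :
    M₁ 0 0 = Complex.exp ((Real.pi : ℂ) * Complex.I * (α₁ : ℂ)) ∧
    M₁ 1 1 = Complex.exp (-((Real.pi : ℂ) * Complex.I * (α₁ : ℂ))) ∧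
    M₁ 0 1 * M₁ 1 0 = 0 :=
  stmt14_general θ hθ k hpar α₀ α₁ αinf hα M₀ M₁ Mt Minf hprod hM₀ hα₀ hMt htr1 htrinf hdet1
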